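/- arXiv:2312.09025 — 3 statements merged into one kernel-verified Lean document; each statement's English description precedes it below -/
import Mathlib

section
/- Conversely, if a, b, c ∈ ℝ² satisfy det(b-a, c-a) > 0 and w lies in the interior of the convex hull of {a,b,c}, then det(b-a, w-a) > 0, det(c-b, w-b) > 0, and det(a-c, w-c) > 0. -/
/-- Order type determinant: det(v-u, w-u). -/
def det3 (u v w : ℝ × ℝ) : ℝ :=
  (v.1 - u.1) * (w.2 - u.2) - (v.2 - u.2) * (w.1 - u.1)

/-! For an edge `u v` of the triangle, `det3 u v ·` is an affine function of the last point: it
vanishes at `u` and `v` and is positive at the third vertex, so it is nonnegative on the convex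
hull. Its linear part is nonzero, hence an open map, so it is strictly positive on the interior. -/

open Set

theorem lt_of_mem_interior_convexHull {E : Type*} [AddCommGroup E] [TopologicalSpace E]
    [ContinuousAdd E] [Module ℝ E] [ContinuousSMul ℝ E]
    {f : StrongDual ℝ E} (hf : f ≠ 0) {s : Set E} {c : ℝ} (hs : ∀ x ∈ s, c ≤ f x) {w : E}
    (hw : w ∈ interior (convexHull ℝ s)) : c < f w := by
  have hhull : convexHull ℝ s ⊆ f ⁻¹' Ici c :=
    convexHull_min hs (convex_halfSpace_ge f.isLinear c)
  have : f w ∈ interior (Ici c) :=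
    interior_mono (image_subset_iff.2 hhull)
      ((f.isOpenMap_of_ne_zero hf).image_interior_subset _ (mem_image_of_mem f hw))
  rwa [interior_Ici] at this

def cross (d : ℝ × ℝ) : StrongDual ℝ (ℝ × ℝ) :=
  d.1 • ContinuousLinearMap.snd ℝ ℝ ℝ - d.2 • ContinuousLinearMap.fst ℝ ℝ ℝ

theorem det3_eq_cross_sub (u v x : ℝ × ℝ) : det3 u v x = cross (v - u) x - cross (v - u) u := by
  simp only [det3, cross, sub_apply, smul_apply, ContinuousLinearMap.coe_snd',
    ContinuousLinearMap.coe_fst', Prod.fst_sub, Prod.snd_sub, smul_eq_mul]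
  ring

theorem det3_rotate (u v x : ℝ × ℝ) : det3 v x u = det3 u v x := by
  simp only [det3]; ring

theorem det3_left_self (u v : ℝ × ℝ) : det3 u v u = 0 := by
  simp only [det3]; ring

theorem det3_right_self (u v : ℝ × ℝ) : det3 u v v = 0 := by
  simp only [det3]; ring

theorem det3_pos_of_mem_interior_convexHull {u v z w : ℝ × ℝ} (h : 0 < det3 u v z)
    (hw : w ∈ interior (convexHull ℝ {u, v, z})) : 0 < det3 u v w := by
  have hcross : cross (v - u) ≠ 0 := by
    intro h0
    rw [det3_eq_cross_sub, h0] at h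
    simp at h
  rw [det3_eq_cross_sub, sub_pos]
  refine lt_of_mem_interior_convexHull hcross (fun x hx => ?_) hw
  rw [← sub_nonneg, ← det3_eq_cross_sub]
  rcases hx with rfl | rfl | rfl
  · rw [det3_left_self]
  · rw [det3_right_self]
  · exact h.le

theorem left_of_sides_of_mem_interior_triangle (a b c w : ℝ × ℝ)
    (habc : 0 < det3 a b c)
    (hw : w ∈ interior (convexHull ℝ ({a, b, c} : Set (ℝ × ℝ)))) :
    0 < det3 a b w ∧ 0 < det3 b c w ∧ 0 < det3 c a w := by
  have hbca : ({b, c, a} : Set (ℝ × ℝ)) = {a, b, c} := by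
    rw [insert_comm a, pair_comm a]
  have hcab : ({c, a, b} : Set (ℝ × ℝ)) = {a, b, c} := by
    rw [insert_comm c a, pair_comm c b]
  refine ⟨det3_pos_of_mem_interior_convexHull habc hw, ?_, ?_⟩
  · exact det3_pos_of_mem_interior_convexHull (by rwa [det3_rotate]) (hbca ▸ hw)
  · exact det3_pos_of_mem_interior_convexHull (by rwa [det3_rotate, det3_rotate]) (hcab ▸ hw)
end

section
/- Order types of planar point sets satisfy Knuth's interiority-type axiom: for points t, s, p, q, r ∈ ℝ², if det(s-t, p-t) > 0, det(s-t, q-t) > 0, det(s-t, r-t) > 0, det(p-t, q-t) > 0 and det(q-t, r-t) > 0, then det(p-t, r-t) > 0. -/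
theorem knuth_interiority (t s p q r : ℝ × ℝ)
    (hp : 0 < det3 t s p) (hq : 0 < det3 t s q) (hr : 0 < det3 t s r)
    (hpq : 0 < det3 t p q) (hqr : 0 < det3 t q r) :
    0 < det3 t p r := by
  have key : det3 t s q * det3 t p r =
      det3 t s p * det3 t q r + det3 t s r * det3 t p q := by
    simp only [det3]; ring
  nlinarith [mul_pos hp hqr, mul_pos hr hpq]
end

section
/- Every directional walk without repeated vertices is realizable: given distinct symbols u₁, …, u_t and any function d : {1,…,t-2} → {left, right}, there exists an injective map f from {u₁,…,u_t} to ℝ² such that for each i with 1 ≤ i ≤ t-2, the sign of det(f(u_{i+1}) - f(u_i), f(u_{i+2}) - f(u_i)) is positive if d(i) = left and negative if d(i) = right. -/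
/-- y-values whose second differences are `±1` according to `d`. -/
def walkY (d : ℕ → Bool) : ℕ → ℝ
  | 0 => 0
  | 1 => 0
  | (n + 2) => 2 * walkY d (n + 1) - walkY d n + (if d n then 1 else -1)

/-- Every directional walk without repeated vertices is realizable.
`d i = true` means a left turn at inner position `i`. -/
theorem directionalWalk_no_repeated_vertices_realizable (t : ℕ) (d : ℕ → Bool) :
    ∃ f : ℕ → ℝ × ℝ,
      (∀ i j, i < t → j < t → f i = f j → i = j) ∧
      ∀ i, i + 2 < t →
        (if d i then 0 < det3 (f i) (f (i + 1)) (f (i + 2))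
         else det3 (f i) (f (i + 1)) (f (i + 2)) < 0) := by
  refine ⟨fun i => ((i : ℝ), walkY d i), ?_, ?_⟩
  · intro i j _ _ h
    have : (i : ℝ) = (j : ℝ) := congrArg Prod.fst h
    exact_mod_cast this
  · intro i _
    have hdet : det3 ((i : ℝ), walkY d i) (((i + 1 : ℕ) : ℝ), walkY d (i + 1))
        (((i + 2 : ℕ) : ℝ), walkY d (i + 2)) = (if d i then 1 else -1) := by
      simp only [det3, walkY]
      push_cast
      ring
    cases h : d i <;> simp [h] at hdet ⊢ <;> rw [hdet] <;> norm_num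
end
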